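/- Fix a > 0 and set H_a := (3 + √(9+8a²))/(2√2·a) and D_a := (27/(16a³))·[ 1 + 4a²/3 + (1 + 8a²/9)^{3/2} ]. Then the function g(h) := 2·D_a − 2√2·h³ + a·(h² − 1)² satisfies g(H_a) = 0 and g(h) > 0 for every h ≥ 0 with h ≠ H_a. In particular, D_a = √2·H_a³ − (a/2)·(H_a² − 1)². -/

import Mathlib

set_option maxHeartbeats 1000000


noncomputable def Ha (a : ℝ) : ℝ :=
  (3 + Real.sqrt (9 + 8 * a ^ 2)) / (2 * Real.sqrt 2 * a)

noncomputable def Da (a : ℝ) : ℝ :=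
  (27 / (16 * a ^ 3)) *
    (1 + 4 * a ^ 2 / 3 + (1 + 8 * a ^ 2 / 9) ^ ((3 : ℝ) / 2))

/-- For `a > 0` the function `g(h) = 2 D_a − 2√2 h³ + a (h² − 1)²` vanishes at
`h = H_a` and is strictly positive at every other `h ≥ 0`; in particular
`D_a = √2 H_a³ − (a/2)(H_a² − 1)²`. -/
theorem g_min_at_Ha (a : ℝ) (ha : 0 < a) :
    (2 * Da a - 2 * Real.sqrt 2 * (Ha a) ^ 3 + a * ((Ha a) ^ 2 - 1) ^ 2 = 0) ∧
    (∀ h : ℝ, 0 ≤ h → h ≠ Ha a →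
      0 < 2 * Da a - 2 * Real.sqrt 2 * h ^ 3 + a * (h ^ 2 - 1) ^ 2) ∧
    Da a = Real.sqrt 2 * (Ha a) ^ 3 - (a / 2) * ((Ha a) ^ 2 - 1) ^ 2 := by
  have ha' : a ≠ 0 := ha.ne'
  set s := Real.sqrt (9 + 8 * a ^ 2) with hs_def
  set r := Real.sqrt 2 with hr_def
  have hr2 : r ^ 2 = 2 := Real.sq_sqrt (by norm_num)
  have hr0 : 0 < r := Real.sqrt_pos.mpr (by norm_num)
  have hr' : r ≠ 0 := hr0.ne'
  have hs0 : 0 ≤ s := Real.sqrt_nonneg _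
  have hs2 : s ^ 2 = 9 + 8 * a ^ 2 := Real.sq_sqrt (by positivity)
  have hs3 : 3 ≤ s := by nlinarith [hs2, hs0, sq_nonneg a]
  have hHa : Ha a = (3 + s) / (2 * r * a) := rfl
  have hHpos : 0 < Ha a := by
    rw [hHa]; exact div_pos (by linarith) (by positivity)
  have hH : 2 * r * a * Ha a = 3 + s := by
    rw [hHa]; field_simp
  have hquad : 2 * a * (Ha a) ^ 2 - 3 * r * (Ha a) - 2 * a = 0 := by
    rw [hHa]; field_simp
    ring_nf
    linear_combination hs2 + (-3*s - 9 - 4*a^2) * hr2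
  have hDa : Da a = (27 + 36 * a ^ 2 + s ^ 3) / (16 * a ^ 3) := by
    rw [Da]
    have h1 : (1 + 8 * a ^ 2 / 9 : ℝ) = (s / 3) ^ 2 := by
      rw [div_pow, hs2]; ring
    have h2 : ((s / 3) ^ 2 : ℝ) ^ ((3 : ℝ) / 2) = (s / 3) ^ 3 := by
      rw [← Real.rpow_natCast (s / 3) 2, ← Real.rpow_mul (by positivity)]
      norm_num
    rw [h1, h2]
    field_simp
    ring
  have h0 : 2 * Da a - 2 * r * (Ha a) ^ 3 + a * ((Ha a) ^ 2 - 1) ^ 2 = 0 := by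
    rw [hDa, hHa]; field_simp
    ring_nf
    linear_combination (16*(s^2-9-8*a^2) + 192*s) * hs2 + (-(1728 + 1152*a^2 + 768*a^2*s + 128*a^2*s^2 + 1728*s + 576*s^2 + 64*s^3) + (864 + 1152*a^2 + 256*a^4 + 32*s^3)*(r^2+2)) * hr2
  refine ⟨h0, ?_, by linarith⟩
  intro h hh hne
  have key : 2 * Da a - 2 * r * h ^ 3 + a * (h ^ 2 - 1) ^ 2 =
      (2 * Da a - 2 * r * (Ha a) ^ 3 + a * ((Ha a) ^ 2 - 1) ^ 2) +
      (h - Ha a) ^ 2 *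
        (a * h ^ 2 + (2 * a * Ha a - 2 * r) * h + (r * Ha a + 2 * a) / 2) := by
    linear_combination ((h - Ha a) * (3 * h + Ha a) / 2) * hquad
  have hbeta : 0 ≤ 2 * a * Ha a - 2 * r := by
    have hx : r * (2 * a * Ha a - 2 * r) = s - 1 := by
      linear_combination hH - 2 * hr2
    nlinarith [hx, hr0, hs3]
  have hQ : 0 < a * h ^ 2 + (2 * a * Ha a - 2 * r) * h + (r * Ha a + 2 * a) / 2 := by
    have h1 : 0 < r * Ha a := mul_pos hr0 hHpos
    have h2 : 0 ≤ (2 * a * Ha a - 2 * r) * h := mul_nonneg hbeta hh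
    nlinarith [sq_nonneg h, mul_nonneg (le_of_lt ha) (sq_nonneg h)]
  have hsq : 0 < (h - Ha a) ^ 2 := by
    have hne' : h - Ha a ≠ 0 := sub_ne_zero.mpr hne
    positivity
  nlinarith [mul_pos hsq hQ, key, h0]
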